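/- arXiv:2512.14570 — 2 statements merged into one kernel-verified Lean document; each statement's English description precedes it below -/
import Mathlib

section
/- Let p, n be integers with −1 ≤ n ≤ p, and let θ be a real polynomial of degree at most p on [−1, 1] which is L²(−1,1)-orthogonal to every polynomial of degree at most n (no condition when n = −1). Then for x₀ ∈ {−1, 1} one has |θ(x₀)|² ≤ ((p−n)(p+n+2)/2) · ∫_{−1}^{1} θ(x)² dx. -/
/-!
Expand `θ` in the Rodrigues polynomials `R_k = (d/dx)^k (x² - 1)^k`, which are orthogonal on
`[-1, 1]`. Orthogonality of `θ` to polynomials of degree `≤ n` kills the coefficients of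
`R_0, …, R_n`, so `θ = ∑_{k=n+1}^{p} c_k R_k` and `‖θ‖² = ∑ c_k² ‖R_k‖²`. Cauchy–Schwarz gives
`θ(±1)² ≤ (∑_{k=n+1}^{p} R_k(±1)² / ‖R_k‖²) ‖θ‖²`, and `R_k(±1)² / ‖R_k‖² = (2k + 1) / 2`, which
sums to `((p + 1)² - (n + 1)²) / 2 = (p - n)(p + n + 2) / 2`.
-/

open MeasureTheory Polynomial Finset

lemma Polynomial.intervalIntegrable_eval (f : ℝ[X]) (a b : ℝ) :
    IntervalIntegrable (fun x => f.eval x) volume a b :=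
  f.continuous.intervalIntegrable a b

lemma Polynomial.intervalIntegrable_eval_mul_eval (f g : ℝ[X]) (a b : ℝ) :
    IntervalIntegrable (fun x => f.eval x * g.eval x) volume a b := by
  simpa using (f * g).intervalIntegrable_eval a b

lemma Polynomial.integral_eval_derivative_mul (u v : ℝ[X]) (a b : ℝ) :
    ∫ x in a..b, (derivative u).eval x * v.eval x =
      u.eval b * v.eval b - u.eval a * v.eval a -
        ∫ x in a..b, u.eval x * (derivative v).eval x := by
  simp_rw [mul_comm ((derivative u).eval _), mul_comm (u.eval _)]
  exact intervalIntegral.integral_mul_deriv_eq_deriv_mul (fun x _ => v.hasDerivAt x)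
    (fun x _ => u.hasDerivAt x) ((derivative v).intervalIntegrable_eval a b)
    ((derivative u).intervalIntegrable_eval a b)

lemma Polynomial.integral_eval_iterate_derivative_mul {F : ℝ[X]} {a b : ℝ} {j : ℕ}
    (ha : (X - C a) ^ j ∣ F) (hb : (X - C b) ^ j ∣ F) (g : ℝ[X]) :
    ∫ x in a..b, (derivative^[j] F).eval x * g.eval x =
      (-1) ^ j * ∫ x in a..b, F.eval x * (derivative^[j] g).eval x := by
  induction j generalizing F g with
  | zero => simp
  | succ j ih =>
    have root {c : ℝ} (hc : (X - C c) ^ (j + 1) ∣ F) : F.eval c = 0 :=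
      (dvd_iff_isRoot.mp ((dvd_pow_self (X - C c) (Nat.add_one_ne_zero j)).trans hc)).eq_zero
    have dvd_derivative {c : ℝ} (hc : (X - C c) ^ (j + 1) ∣ F) : (X - C c) ^ j ∣ derivative F := by
      simpa using pow_sub_one_dvd_derivative_of_pow_dvd hc
    rw [Function.iterate_succ_apply, ih (dvd_derivative ha) (dvd_derivative hb),
      integral_eval_derivative_mul, root ha, root hb,
      ← Function.iterate_succ_apply' derivative]
    ring

lemma Polynomial.iterate_derivative_eq_C_of_natDegree_le {p : ℝ[X]} {n : ℕ} (hp : p.natDegree ≤ n) :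
    derivative^[n] p = C (n.factorial * p.coeff n) := by
  have h0 : (derivative^[n] p).natDegree ≤ 0 := (natDegree_iterate_derivative p n).trans (by omega)
  rw [eq_C_of_natDegree_le_zero h0, coeff_iterate_derivative, zero_add, Nat.descFactorial_self,
    nsmul_eq_mul]

/-- `2^k k!` times the Legendre polynomial `P_k`. -/
noncomputable def rodrigues (k : ℕ) : ℝ[X] := derivative^[k] ((X ^ 2 - 1) ^ k)

lemma X_sq_sub_one_pow_eq_mul_pow {a : ℝ} (ha : a ^ 2 = 1) (k : ℕ) :
    (X ^ 2 - 1 : ℝ[X]) ^ k = (X - C a) ^ k * (X + C a) ^ k := by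
  rw [← mul_pow, mul_comm, ← sq_sub_sq, ← C_pow, ha, C_1]

lemma monic_X_sq_sub_one_pow (k : ℕ) : ((X ^ 2 - 1 : ℝ[X]) ^ k).Monic := by
  simpa using ((monic_X_pow_sub_C (1 : ℝ) two_ne_zero).pow k)

lemma natDegree_X_sq_sub_one_pow (k : ℕ) : ((X ^ 2 - 1 : ℝ[X]) ^ k).natDegree = 2 * k := by
  rw [← C_1, (monic_X_pow_sub_C (1 : ℝ) two_ne_zero).natDegree_pow, natDegree_X_pow_sub_C,
    mul_comm]

lemma coeff_X_sq_sub_one_pow_two_mul (k : ℕ) : ((X ^ 2 - 1 : ℝ[X]) ^ k).coeff (2 * k) = 1 := by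
  rw [← natDegree_X_sq_sub_one_pow]
  exact (monic_X_sq_sub_one_pow k).leadingCoeff

lemma coeff_rodrigues_self (k : ℕ) : (rodrigues k).coeff k = (2 * k).descFactorial k := by
  rw [rodrigues, coeff_iterate_derivative, ← two_mul, coeff_X_sq_sub_one_pow_two_mul, nsmul_one]

lemma natDegree_rodrigues_le (k : ℕ) : (rodrigues k).natDegree ≤ k :=
  (natDegree_iterate_derivative _ k).trans (by rw [natDegree_X_sq_sub_one_pow]; omega)

lemma degree_rodrigues (k : ℕ) : (rodrigues k).degree = k := by
  refine degree_eq_of_le_of_coeff_ne_zero (degree_le_of_natDegree_le (natDegree_rodrigues_le k)) ?_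
  rw [coeff_rodrigues_self]
  exact_mod_cast (Nat.descFactorial_pos.mpr (by omega)).ne'

lemma eval_rodrigues {a : ℝ} (ha : a ^ 2 = 1) (k : ℕ) :
    (rodrigues k).eval a = k.factorial * (2 * a) ^ k := by
  have := aeval_iterate_derivative_self ((X ^ 2 - 1 : ℝ[X]) ^ k) k a (p' := (X + C a) ^ k)
    (by rw [Algebra.algebraMap_self, map_id, X_sq_sub_one_pow_eq_mul_pow ha])
  rw [coe_aeval_eq_eval] at this
  rw [rodrigues, this]
  simp [two_mul]

lemma sq_eval_rodrigues {a : ℝ} (ha : a ^ 2 = 1) (k : ℕ) :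
    (rodrigues k).eval a ^ 2 = (2 ^ k * k.factorial) ^ 2 := by
  have hak : (a ^ k) ^ 2 = 1 := by rw [← pow_mul, mul_comm, pow_mul, ha, one_pow]
  rw [eval_rodrigues ha, mul_pow 2 a]
  linear_combination (2 ^ k * (k.factorial : ℝ)) ^ 2 * hak

lemma integral_rodrigues_mul (k : ℕ) (g : ℝ[X]) :
    ∫ x in (-1)..1, (rodrigues k).eval x * g.eval x =
      (-1) ^ k * ∫ x in (-1)..1, ((X ^ 2 - 1) ^ k : ℝ[X]).eval x * (derivative^[k] g).eval x :=
  have hdvd {a : ℝ} (ha : a ^ 2 = 1) : (X - C a) ^ k ∣ (X ^ 2 - 1 : ℝ[X]) ^ k :=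
    X_sq_sub_one_pow_eq_mul_pow ha k ▸ dvd_mul_right _ _
  integral_eval_iterate_derivative_mul (hdvd (by norm_num)) (hdvd (by norm_num)) g

lemma integral_rodrigues_mul_eq_zero {k : ℕ} {q : ℝ[X]} (hq : q.natDegree < k) :
    ∫ x in (-1)..1, (rodrigues k).eval x * q.eval x = 0 := by
  simp [integral_rodrigues_mul, iterate_derivative_eq_zero hq]

lemma iterate_derivative_rodrigues_self (k : ℕ) :
    derivative^[k] (rodrigues k) = C ((2 * k).factorial : ℝ) := by
  rw [rodrigues, ← Function.iterate_add_apply, ← two_mul,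
    iterate_derivative_eq_C_of_natDegree_le (natDegree_X_sq_sub_one_pow k).le,
    coeff_X_sq_sub_one_pow_two_mul, mul_one]

-- Substituting `x = cos t` turns this into Wallis' integral `∫₀^π sin^(2k+1) t dt`.
lemma integral_one_sub_sq_pow (k : ℕ) :
    ∫ x in (-1 : ℝ)..1, (1 - x ^ 2) ^ k = 2 * ∏ i ∈ range k, (2 * (i : ℝ) + 2) / (2 * i + 3) := by
  have h := integral_sin_pow_odd_mul_cos_pow (a := 0) (b := Real.pi) k 0
  simp only [pow_zero, one_mul, mul_one, Real.cos_pi, Real.cos_zero] at h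
  rw [← h, integral_sin_pow_odd]

lemma two_mul_add_one_factorial_mul_prod_eq (k : ℕ) :
    ((2 * k + 1).factorial : ℝ) * ∏ i ∈ range k, (2 * (i : ℝ) + 2) / (2 * i + 3) =
      4 ^ k * (k.factorial : ℝ) ^ 2 := by
  induction k with
  | zero => simp
  | succ k ih =>
    have h2k : ((2 * (k + 1) + 1).factorial : ℝ) =
        (2 * k + 3) * (2 * k + 2) * (2 * k + 1).factorial := by
      rw [show 2 * (k + 1) + 1 = 2 * k + 1 + 1 + 1 by ring, Nat.factorial_succ,
        Nat.factorial_succ]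
      push_cast; ring
    rw [prod_range_succ, h2k, Nat.factorial_succ k]
    generalize ∏ i ∈ range k, (2 * (i : ℝ) + 2) / (2 * i + 3) = P at ih ⊢
    push_cast
    field_simp
    linear_combination 4 * ih

lemma integral_sq_rodrigues (k : ℕ) :
    ∫ x in (-1)..1, (rodrigues k).eval x ^ 2 = 2 * (2 ^ k * k.factorial) ^ 2 / (2 * k + 1) := by
  have hW : ∫ x in (-1)..1, (rodrigues k).eval x ^ 2 =
      (2 * k).factorial * ∫ x in (-1 : ℝ)..1, (1 - x ^ 2) ^ k := by
    simp_rw [sq, integral_rodrigues_mul, iterate_derivative_rodrigues_self, eval_C,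
      ← intervalIntegral.integral_const_mul]
    congr 1 with x
    simp only [eval_pow, eval_sub, eval_X, eval_one]
    rw [mul_left_comm, ← mul_assoc, ← mul_pow]
    ring
  rw [hW, integral_one_sub_sq_pow, eq_div_iff (by positivity)]
  have h4 : ((2 : ℝ) ^ k) ^ 2 = 4 ^ k := by rw [← pow_mul, mul_comm, pow_mul]; norm_num
  rw [mul_pow, h4, ← two_mul_add_one_factorial_mul_prod_eq, Nat.factorial_succ (2 * k)]
  push_cast
  ring

lemma integral_rodrigues_mul_rodrigues_of_ne {j k : ℕ} (h : j ≠ k) :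
    ∫ x in (-1)..1, (rodrigues j).eval x * (rodrigues k).eval x = 0 := by
  rcases h.lt_or_gt with h | h
  · simp_rw [mul_comm ((rodrigues j).eval _)]
    exact integral_rodrigues_mul_eq_zero ((natDegree_rodrigues_le j).trans_lt h)
  · exact integral_rodrigues_mul_eq_zero ((natDegree_rodrigues_le k).trans_lt h)

lemma exists_sum_smul_rodrigues_eq {f : ℝ[X]} {m : ℕ} (hf : f.natDegree ≤ m) :
    ∃ c : ℕ → ℝ, ∑ k ∈ range (m + 1), c k • rodrigues k = f := by
  have hmem : f ∈ degreeLT ℝ (m + 1) := by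
    rw [mem_degreeLT]
    exact (degree_le_of_natDegree_le hf).trans_lt (by exact_mod_cast Nat.lt_succ_self m)
  let S : Sequence ℝ := ⟨rodrigues, degree_rodrigues⟩
  have hspan := S.span_degreeLT (m := m + 1) fun i _ =>
    isUnit_iff_ne_zero.mpr (leadingCoeff_ne_zero.mpr (S.ne_zero i))
  rwa [← hspan, show Set.Iio (m + 1) = range (m + 1) by simp,
    Submodule.mem_span_image_finset_iff_exists_fun'] at hmem

lemma integral_sum_smul_rodrigues_mul_rodrigues (s : Finset ℕ) (c : ℕ → ℝ) {j : ℕ} (hj : j ∈ s) :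
    ∫ x in (-1)..1, (∑ k ∈ s, c k • rodrigues k).eval x * (rodrigues j).eval x =
      c j * ∫ x in (-1)..1, (rodrigues j).eval x ^ 2 := by
  simp_rw [eval_finsetSum, eval_smul, smul_eq_mul, sum_mul, mul_assoc]
  rw [intervalIntegral.integral_finsetSum fun k _ =>
      ((rodrigues k).intervalIntegrable_eval_mul_eval (rodrigues j) _ _).const_mul _]
  simp_rw [intervalIntegral.integral_const_mul, sq]
  exact sum_eq_single_of_mem j hj fun k _ hkj => by
    rw [integral_rodrigues_mul_rodrigues_of_ne hkj, mul_zero]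

lemma integral_sq_sum_smul_rodrigues (s : Finset ℕ) (c : ℕ → ℝ) :
    ∫ x in (-1)..1, (∑ k ∈ s, c k • rodrigues k).eval x ^ 2 =
      ∑ k ∈ s, c k ^ 2 * ∫ x in (-1)..1, (rodrigues k).eval x ^ 2 := by
  set f := ∑ k ∈ s, c k • rodrigues k with hf
  calc ∫ x in (-1)..1, f.eval x ^ 2
      = ∫ x in (-1)..1, ∑ k ∈ s, c k * (f.eval x * (rodrigues k).eval x) := by
        congr 1 with x
        rw [sq]
        nth_rewrite 2 [hf]
        simp_rw [eval_finsetSum, eval_smul, smul_eq_mul, mul_sum]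
        exact sum_congr rfl fun k _ => by ring
    _ = ∑ k ∈ s, c k * (c k * ∫ x in (-1)..1, (rodrigues k).eval x ^ 2) := by
        rw [intervalIntegral.integral_finsetSum fun k _ =>
          (f.intervalIntegrable_eval_mul_eval (rodrigues k) _ _).const_mul _]
        refine sum_congr rfl fun k hk => ?_
        rw [intervalIntegral.integral_const_mul, integral_sum_smul_rodrigues_mul_rodrigues s c hk]
    _ = _ := by simp_rw [← mul_assoc, sq]

lemma sum_Ico_two_mul_add_one {m n : ℕ} (h : m ≤ n) :
    ∑ k ∈ Ico m n, (2 * (k : ℝ) + 1) = n ^ 2 - m ^ 2 := by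
  induction n, h using Nat.le_induction with
  | base => simp
  | succ n hmn ih =>
    rw [sum_Ico_succ_top hmn, ih]
    push_cast
    ring

lemma sq_eval_sum_smul_rodrigues_le (s : Finset ℕ) (c : ℕ → ℝ) {a : ℝ} (ha : a ^ 2 = 1) :
    (∑ k ∈ s, c k • rodrigues k).eval a ^ 2 ≤
      (∑ k ∈ s, (2 * (k : ℝ) + 1) / 2) *
        ∫ x in (-1)..1, (∑ k ∈ s, c k • rodrigues k).eval x ^ 2 := by
  rw [integral_sq_sum_smul_rodrigues, eval_finsetSum]
  simp_rw [eval_smul, smul_eq_mul]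
  refine sum_sq_le_sum_mul_sum_of_sq_le_mul s (fun k _ => by positivity)
    (fun k _ => by rw [integral_sq_rodrigues]; positivity) fun k _ => le_of_eq ?_
  rw [integral_sq_rodrigues, mul_pow, sq_eval_rodrigues ha]
  field_simp

theorem sq_eval_le_of_integral_mul_rodrigues_eq_zero {θ : ℝ[X]} {P N : ℕ} (hθ : θ.natDegree ≤ P)
    (hNP : N ≤ P + 1) (horth : ∀ j < N, ∫ x in (-1)..1, θ.eval x * (rodrigues j).eval x = 0)
    {a : ℝ} (ha : a ^ 2 = 1) :
    θ.eval a ^ 2 ≤ (((P : ℝ) + 1) ^ 2 - N ^ 2) / 2 * ∫ x in (-1)..1, θ.eval x ^ 2 := by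
  obtain ⟨c, rfl⟩ := exists_sum_smul_rodrigues_eq hθ
  have hc : ∀ j ∈ range (P + 1), j < N → c j = 0 := fun j hj hjN => by
    have := horth j hjN
    rw [integral_sum_smul_rodrigues_mul_rodrigues _ c hj, integral_sq_rodrigues] at this
    simpa [(by positivity : (0 : ℝ) < 2 * (2 ^ j * j.factorial) ^ 2 / (2 * j + 1)).ne'] using this
  have hsum : ∑ k ∈ range (P + 1), c k • rodrigues k = ∑ k ∈ Ico N (P + 1), c k • rodrigues k :=
    (sum_subset (fun k hk => mem_range.mpr (mem_Ico.mp hk).2) fun k hk hk' => by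
      simp [hc k hk (by simpa [mem_range.mp hk] using hk')]).symm
  rw [hsum, ← Nat.cast_succ, ← sum_Ico_two_mul_add_one hNP, sum_div]
  exact sq_eval_sum_smul_rodrigues_le _ c ha

/-- Let `-1 ≤ n ≤ p` be integers and let `θ` be a real polynomial of degree at most `p`
which is `L²(-1,1)`-orthogonal to every polynomial of degree at most `n` (vacuous when
`n = -1`).  Then for `x₀ ∈ {-1, 1}`,
`|θ(x₀)|² ≤ ((p-n)(p+n+2)/2) ⬝ ∫_{-1}^{1} θ(x)² dx`. -/
theorem endpoint_bound_orthogonal_polynomial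
    (p n : ℤ) (hn : -1 ≤ n) (hnp : n ≤ p)
    (θ : Polynomial ℝ)
    (hθ : θ = 0 ∨ (θ.natDegree : ℤ) ≤ p)
    (horth : ∀ q : Polynomial ℝ, (q.natDegree : ℤ) ≤ n →
      ∫ x in (-1 : ℝ)..1, θ.eval x * q.eval x = 0)
    (x₀ : ℝ) (hx₀ : x₀ = -1 ∨ x₀ = 1) :
    (θ.eval x₀) ^ 2 ≤
      (((p - n) * (p + n + 2) : ℤ) : ℝ) / 2 *
        ∫ x in (-1 : ℝ)..1, (θ.eval x) ^ 2 := by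
  rcases hθ with rfl | hθ
  · simp
  lift p to ℕ using (Nat.cast_nonneg _).trans hθ
  obtain ⟨N, hN⟩ : ∃ N : ℕ, n + 1 = N := Int.eq_ofNat_of_zero_le (by omega)
  have hbound := sq_eval_le_of_integral_mul_rodrigues_eq_zero (P := p) (N := N) (by omega)
    (by omega) (fun j hj => horth _ (by have := natDegree_rodrigues_le j; omega))
    (a := x₀) (by rcases hx₀ with rfl | rfl <;> norm_num)
  have hn' : (n : ℝ) = N - 1 := by rw [← Int.cast_natCast, ← hN]; push_cast; ring
  convert hbound using 3
  push_cast
  rw [hn']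
  ring
end

section
/- Let p, n be integers with −1 ≤ n < p and let S = {(i, j, k) ∈ ℕ³ : n+1 ≤ i+j+k ≤ p}. Define the real symmetric matrix L indexed by S × S with entries L_{(i,j,k),(l,m,q)} = δ_{il} · δ_{jm} · (−1)^{k+q} · √((2(i+j+k)+3)/2) · √((2(l+m+q)+3)/2), where δ denotes the Kronecker delta. Then L is positive semidefinite and its largest eigenvalue (equivalently, its spectral radius) equals (p−n)(p+n+4)/2. -/
/-! `L` is block diagonal over the pair `(i, j)`, and its `(i, j)` block is the rank-one matrix
`f fᵀ` with `f (i, j, k) = (-1)^k √((2(i+j+k)+3)/2)`. Such a block is positive semidefinite with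
sole nonzero eigenvalue `‖f‖²`, so the largest eigenvalue of `L` is the largest block sum
`∑_k (2(i+j+k)+3)/2`. On a block the total degree `d = i+j+k` determines `k` and ranges over a
subset of `(n, p]`, all of which is attained by the block `(0, 0)`; hence the maximum is
`∑_{d=n+1}^{p} (2d+3)/2 = (p-n)(p+n+4)/2`. -/

open Finset Matrix

theorem Matrix.mem_spectrum_iff_exists_mulVec_eq_smul {n K : Type*} [Fintype n] [DecidableEq n]
    [Field K] {A : Matrix n n K} {μ : K} : μ ∈ spectrum K A ↔ ∃ v ≠ 0, A *ᵥ v = μ • v := by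
  rw [← Matrix.spectrum_toLin', ← Module.End.hasEigenvalue_iff_mem_spectrum]
  constructor
  · intro h
    obtain ⟨v, hv⟩ := h.exists_hasEigenvector
    exact ⟨v, hv.2, by simpa using hv.apply_eq_smul⟩
  · rintro ⟨v, hv0, hv⟩
    exact Module.End.hasEigenvalue_of_hasEigenvector
      ⟨Module.End.mem_eigenspace_iff.2 (by simpa using hv), hv0⟩

theorem Finset.sum_sum_ite_eq_sum_image_sq {ι κ R : Type*} [Fintype ι] [DecidableEq κ]
    [CommSemiring R] (g : ι → κ) (y : ι → R) :
    ∑ a, ∑ b, (if g a = g b then y a * y b else 0) =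
      ∑ c ∈ univ.image g, (∑ a with g a = c, y a) ^ 2 := by
  symm
  calc ∑ c ∈ univ.image g, (∑ a with g a = c, y a) ^ 2
      = ∑ c ∈ univ.image g, ∑ a with g a = c, y a * ∑ b with g b = g a, y b := by
        refine sum_congr rfl fun c _ => ?_
        rw [sq, sum_mul]
        refine sum_congr rfl fun a ha => ?_
        rw [(mem_filter.1 ha).2]
    _ = ∑ a, y a * ∑ b with g b = g a, y b :=
        sum_fiberwise_of_maps_to (fun a _ => mem_image_of_mem g (mem_univ a)) _
    _ = _ := by simp only [mul_sum, sum_filter, mul_ite, mul_zero, eq_comm]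

namespace Matrix

variable {ι κ : Type*} [DecidableEq κ] (g : ι → κ) (f : ι → ℝ)

def blockRankOne : Matrix ι ι ℝ := of fun a b => if g a = g b then f a * f b else 0

theorem blockRankOne_isHermitian : (blockRankOne g f).IsHermitian := by
  ext a b
  simp only [blockRankOne, conjTranspose_apply, of_apply, star_trivial, eq_comm, mul_comm]

variable [Fintype ι]

theorem dotProduct_blockRankOne_mulVec (x : ι → ℝ) :
    x ⬝ᵥ (blockRankOne g f *ᵥ x) = ∑ c ∈ univ.image g, (∑ a with g a = c, f a * x a) ^ 2 := by
  rw [← sum_sum_ite_eq_sum_image_sq]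
  simp only [dotProduct, mulVec, blockRankOne, of_apply, mul_sum, ite_mul, zero_mul, mul_ite,
    mul_zero]
  exact sum_congr rfl fun a _ => sum_congr rfl fun b _ => by split_ifs <;> ring

theorem blockRankOne_posSemidef : (blockRankOne g f).PosSemidef :=
  .of_dotProduct_mulVec_nonneg (blockRankOne_isHermitian g f) fun x => by
    rw [star_trivial, dotProduct_blockRankOne_mulVec]
    exact sum_nonneg fun c _ => sq_nonneg _

theorem blockRankOne_mulVec_fiber (c : κ) :
    blockRankOne g f *ᵥ (fun a => if g a = c then f a else 0) =
      (∑ a with g a = c, f a ^ 2) • fun a => if g a = c then f a else 0 := by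
  ext a
  have hterm : ∀ b, (if g a = g b then f a * f b else 0) * (if g b = c then f b else 0) =
      if g b = c then (if g a = c then f a else 0) * f b ^ 2 else 0 := by
    intro b
    by_cases hb : g b = c <;> by_cases ha : g a = c <;> simp [hb, ha, sq, mul_assoc]
  simp only [mulVec, dotProduct, blockRankOne, of_apply, hterm, ← sum_filter, Pi.smul_apply,
    smul_eq_mul]
  rw [← mul_sum, mul_comm]

variable [DecidableEq ι]

theorem sum_fiber_sq_mem_spectrum_blockRankOne {c : κ} (h : ∑ a with g a = c, f a ^ 2 ≠ 0) :
    ∑ a with g a = c, f a ^ 2 ∈ spectrum ℝ (blockRankOne g f) := by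
  obtain ⟨a, ha, hfa⟩ := exists_ne_zero_of_sum_ne_zero h
  rw [mem_filter] at ha
  replace hfa : f a ≠ 0 := pow_ne_zero_iff two_ne_zero |>.1 hfa
  refine mem_spectrum_iff_exists_mulVec_eq_smul.2
    ⟨_, fun h0 => hfa ?_, blockRankOne_mulVec_fiber g f c⟩
  simpa [ha.2] using congrFun h0 a

theorem le_of_mem_spectrum_blockRankOne {lam μ : ℝ} (h : ∀ c, ∑ a with g a = c, f a ^ 2 ≤ lam)
    (hμ : μ ∈ spectrum ℝ (blockRankOne g f)) : μ ≤ lam := by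
  obtain ⟨v, hv0, hv⟩ := mem_spectrum_iff_exists_mulVec_eq_smul.1 hμ
  have hpos : (0 : ℝ) < v ⬝ᵥ v := by
    simpa using dotProduct_self_star_pos_iff.2 hv0
  refine le_of_mul_le_mul_right ?_ hpos
  calc μ * (v ⬝ᵥ v) = ∑ c ∈ univ.image g, (∑ a with g a = c, f a * v a) ^ 2 := by
        rw [← dotProduct_blockRankOne_mulVec, hv, dotProduct_smul, smul_eq_mul]
    _ ≤ ∑ c ∈ univ.image g, (∑ a with g a = c, f a ^ 2) * ∑ a with g a = c, v a ^ 2 :=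
        sum_le_sum fun c _ => sum_mul_sq_le_sq_mul_sq _ _ _
    _ ≤ ∑ c ∈ univ.image g, lam * ∑ a with g a = c, v a ^ 2 :=
        sum_le_sum fun c _ => mul_le_mul_of_nonneg_right (h c) (sum_nonneg fun a _ => sq_nonneg _)
    _ = lam * (v ⬝ᵥ v) := by
        rw [← mul_sum, sum_fiberwise_of_maps_to (fun a _ => mem_image_of_mem g (mem_univ a))]
        simp only [dotProduct, sq]

end Matrix

def faceKey (x : ℕ × ℕ × ℕ) : ℕ × ℕ := (x.1, x.2.1)

def totalDegree (x : ℕ × ℕ × ℕ) : ℕ := x.1 + x.2.1 + x.2.2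

noncomputable def faceWeight (d : ℤ) : ℝ := (2 * d + 3) / 2

noncomputable def faceMode (x : ℕ × ℕ × ℕ) : ℝ := (-1) ^ x.2.2 * √(faceWeight (totalDegree x))

theorem eq_of_faceKey_eq_of_totalDegree_eq {x y : ℕ × ℕ × ℕ} (hk : faceKey x = faceKey y)
    (hd : totalDegree x = totalDegree y) : x = y := by
  obtain ⟨x₁, x₂, x₃⟩ := x
  obtain ⟨y₁, y₂, y₃⟩ := y
  simp only [faceKey, totalDegree, Prod.mk.injEq] at hk hd ⊢
  omega

theorem faceWeight_nonneg {d : ℤ} (hd : -1 ≤ d) : 0 ≤ faceWeight d := by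
  have : (-1 : ℝ) ≤ d := by exact_mod_cast hd
  unfold faceWeight
  linarith

theorem faceMode_sq (x : ℕ × ℕ × ℕ) : faceMode x ^ 2 = faceWeight (totalDegree x) := by
  rw [faceMode, mul_pow, ← pow_mul, pow_mul', neg_one_sq, one_pow, one_mul,
    Real.sq_sqrt (faceWeight_nonneg (by omega))]

theorem sum_Ioc_faceWeight {n p : ℤ} (h : n ≤ p) :
    ∑ d ∈ Ioc n p, faceWeight d = (((p - n) * (p + n + 4) : ℤ) : ℝ) / 2 := by
  induction p, h using Int.leInduction with
  | base => simp
  | succ p hnp ih =>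
    rw [← insert_Ioc_right_eq_Ioc_add_one_of_not_isMax hnp (not_isMax p),
      sum_insert (by simp), ih, faceWeight]
    push_cast
    ring

section FiberSums

variable {n p : ℤ} {S : Set (ℕ × ℕ × ℕ)} [Fintype S] (w : ℤ → ℝ)

theorem sum_fiber_eq_sum_image_totalDegree (c : ℕ × ℕ) :
    ∑ a : S with faceKey a.1 = c, w (totalDegree a.1) =
      ∑ d ∈ ({a : S | faceKey a.1 = c} : Finset S).image (fun a => (totalDegree a.1 : ℤ)), w d := by
  refine (sum_image fun a ha b hb hab => Subtype.ext ?_).symm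
  exact eq_of_faceKey_eq_of_totalDegree_eq ((mem_filter.1 ha).2.trans (mem_filter.1 hb).2.symm)
    (by exact_mod_cast hab)

theorem sum_fiber_le_sum_Ioc
    (hS : ∀ x, x ∈ S ↔ n < (totalDegree x : ℤ) ∧ (totalDegree x : ℤ) ≤ p)
    (hw : ∀ d ∈ Ioc n p, 0 ≤ w d) (c : ℕ × ℕ) :
    ∑ a : S with faceKey a.1 = c, w (totalDegree a.1) ≤ ∑ d ∈ Ioc n p, w d := by
  rw [sum_fiber_eq_sum_image_totalDegree]
  refine sum_le_sum_of_subset_of_nonneg ?_ fun d hd _ => hw d hd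
  intro d hd
  obtain ⟨a, -, rfl⟩ := mem_image.1 hd
  exact mem_Ioc.2 ((hS a).1 a.2)

theorem sum_fiber_zero_eq_sum_Ioc
    (hS : ∀ x, x ∈ S ↔ n < (totalDegree x : ℤ) ∧ (totalDegree x : ℤ) ≤ p) (hn : -1 ≤ n) :
    ∑ a : S with faceKey a.1 = (0, 0), w (totalDegree a.1) = ∑ d ∈ Ioc n p, w d := by
  rw [sum_fiber_eq_sum_image_totalDegree]
  congr 1
  ext d
  simp only [mem_image, mem_filter, mem_univ, true_and, mem_Ioc]
  constructor
  · rintro ⟨a, -, rfl⟩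
    exact (hS a).1 a.2
  · intro hd
    have hmem : ((0, 0, d.toNat) : ℕ × ℕ × ℕ) ∈ S := (hS _).2 (by simp [totalDegree]; omega)
    exact ⟨⟨_, hmem⟩, rfl, by simp [totalDegree]; omega⟩

end FiberSums

/-- **The tetrahedron face mass matrix.**  For integers `-1 ≤ n < p`, the real symmetric
matrix `L` indexed by `S = {(i,j,k) ∈ ℕ³ : n+1 ≤ i+j+k ≤ p}` with entries
`L (i,j,k) (l,m,q) = δ_{il} δ_{jm} (-1)^(k+q) √((2(i+j+k)+3)/2) √((2(l+m+q)+3)/2)`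
(obtained by restricting the Dubiner orthonormal basis of `ℙ_p` on the reference
tetrahedron to the face `t = -1` and discarding all modes of total degree at most `n`)
is positive semidefinite and its largest eigenvalue (equivalently, its spectral radius)
equals `(p-n)(p+n+4)/2`. -/
theorem tetrahedron_face_mass_matrix_spectrum
    (p n : ℤ) (hn : -1 ≤ n) (hnp : n < p)
    (S : Set (ℕ × ℕ × ℕ))
    (hS : S = {x | n + 1 ≤ ((x.1 + x.2.1 + x.2.2 : ℕ) : ℤ) ∧
      ((x.1 + x.2.1 + x.2.2 : ℕ) : ℤ) ≤ p})
    [Fintype S]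
    (L : Matrix S S ℝ)
    (hL : ∀ a b : S,
      L a b = (if (a : ℕ × ℕ × ℕ).1 = (b : ℕ × ℕ × ℕ).1 then (1 : ℝ) else 0) *
        (if (a : ℕ × ℕ × ℕ).2.1 = (b : ℕ × ℕ × ℕ).2.1 then (1 : ℝ) else 0) *
        (-1 : ℝ) ^ ((a : ℕ × ℕ × ℕ).2.2 + (b : ℕ × ℕ × ℕ).2.2) *
        Real.sqrt ((2 * (((a : ℕ × ℕ × ℕ).1 : ℝ) + ((a : ℕ × ℕ × ℕ).2.1 : ℝ) +
          ((a : ℕ × ℕ × ℕ).2.2 : ℝ)) + 3) / 2) *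
        Real.sqrt ((2 * (((b : ℕ × ℕ × ℕ).1 : ℝ) + ((b : ℕ × ℕ × ℕ).2.1 : ℝ) +
          ((b : ℕ × ℕ × ℕ).2.2 : ℝ)) + 3) / 2)) :
    L.PosSemidef ∧
      (((p - n) * (p + n + 4) : ℤ) : ℝ) / 2 ∈ spectrum ℝ L ∧
      ∀ μ ∈ spectrum ℝ L, μ ≤ (((p - n) * (p + n + 4) : ℤ) : ℝ) / 2 := by
  have hSdeg : ∀ x, x ∈ S ↔ n < (totalDegree x : ℤ) ∧ (totalDegree x : ℤ) ≤ p := by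
    simp [hS, totalDegree]
  have hL_eq : L = blockRankOne (fun a : S => faceKey a) (fun a => faceMode a) := by
    ext a b
    rw [hL, blockRankOne, of_apply]
    simp only [faceKey, faceMode, faceWeight, totalDegree, Prod.mk.injEq, ite_and, pow_add]
    push_cast
    split_ifs <;> ring
  have hfiber (c : ℕ × ℕ) : ∑ a : S with faceKey a.1 = c, faceMode a.1 ^ 2 =
      ∑ a : S with faceKey a.1 = c, faceWeight (totalDegree a.1) := by
    simp only [faceMode_sq]
  have hlam : ∑ a : S with faceKey a.1 = (0, 0), faceMode a.1 ^ 2 =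
      (((p - n) * (p + n + 4) : ℤ) : ℝ) / 2 := by
    rw [hfiber, sum_fiber_zero_eq_sum_Ioc faceWeight hSdeg hn, sum_Ioc_faceWeight hnp.le]
  subst hL_eq
  refine ⟨blockRankOne_posSemidef _ _, ?_,
    fun μ hμ => le_of_mem_spectrum_blockRankOne _ _ (fun c => ?_) hμ⟩
  · have : 0 < p - n := by omega
    have : 0 < p + n + 4 := by omega
    rw [← hlam]
    exact sum_fiber_sq_mem_spectrum_blockRankOne _ _ (by rw [hlam]; positivity)
  · rw [hfiber, ← sum_Ioc_faceWeight hnp.le]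
    exact sum_fiber_le_sum_Ioc faceWeight hSdeg
      (fun d hd => faceWeight_nonneg (by linarith [(mem_Ioc.1 hd).1])) c
end
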